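/- arXiv:2003.13037 — 6 statements merged into one kernel-verified Lean document; each statement's English description precedes it below -/
import Mathlib

section
/- The linear map ♭ : V → V* defined by ♭(X)(w) = ω(X, w) + η(X)·η(w) is a linear isomorphism. (Pointwise version of the C∞(M)-module isomorphism ♭ : 𝔛(M) → Ω¹(M), X ↦ i(X)dη + (i(X)η)η, of a contact manifold.) -/
/-- Pointwise version of the `C^∞(M)`-module isomorphism
`♭ : 𝔛(M) → Ω¹(M)`, `X ↦ i(X)dη + (i(X)η)η`, of a contact manifold:
the linear map `♭(X)(w) = ω(X, w) + η(X)·η(w)` is a linear isomorphism. -/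
theorem flat_is_isomorphism (n : ℕ) (V : Type*) [AddCommGroup V] [Module ℝ V]
    [FiniteDimensional ℝ V] (hdim : Module.finrank ℝ V = 2 * n + 1)
    (η : V →ₗ[ℝ] ℝ) (hη : η ≠ 0)
    (ω : V →ₗ[ℝ] V →ₗ[ℝ] ℝ) (halt : ∀ x : V, ω x x = 0)
    (hnd : ∀ x ∈ LinearMap.ker η, (∀ y ∈ LinearMap.ker η, ω x y = 0) → x = 0)
    (flat : V →ₗ[ℝ] Module.Dual ℝ V)
    (hflat : ∀ X w : V, flat X w = ω X w + η X * η w) :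
    Function.Bijective flat := by
  have hinj : Function.Injective flat := by
    rw [← LinearMap.ker_eq_bot, LinearMap.ker_eq_bot']
    intro X hX
    have hXw : ∀ w, ω X w + η X * η w = 0 := by
      intro w
      rw [← hflat]
      rw [hX]
      rfl
    have hηX : η X = 0 := by
      have := hXw X
      rw [halt X, zero_add] at this
      exact mul_self_eq_zero.mp this
    have hωX : ∀ w, ω X w = 0 := by
      intro w
      have := hXw w
      rwa [hηX, zero_mul, add_zero] at this
    exact hnd X (by simp [hηX]) fun y _ => hωX y
  exact ⟨hinj, (LinearMap.injective_iff_surjective_of_finrank_eq_finrank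
    Subspace.dual_finrank_eq.symm).mp hinj⟩
end

section
/- For every linear functional α : V → ℝ (playing the role of dH at a point) and every h ∈ ℝ (the value of H at that point), there exists a unique vector X ∈ V such that ω(X, w) = α(w) − α(R)·η(w) for all w ∈ V and η(X) = −h. (Pointwise version of the theorem that for every Hamiltonian H on a contact manifold there is a unique contact Hamiltonian vector field X_H with i(X_H)dη = dH − (R(H))η and i(X_H)η = −H.) -/
set_option maxHeartbeats 1000000 in


/-- Pointwise version of the theorem that for every Hamiltonian `H` on a contact
manifold there is a unique contact Hamiltonian vector field `X_H` with
`i(X_H)dη = dH − (R(H))η` and `i(X_H)η = −H`. -/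
theorem contact_hamiltonian_vector_exists_unique (n : ℕ) (V : Type*) [AddCommGroup V]
    [Module ℝ V] [FiniteDimensional ℝ V] (hdim : Module.finrank ℝ V = 2 * n + 1)
    (η : V →ₗ[ℝ] ℝ) (hη : η ≠ 0)
    (ω : V →ₗ[ℝ] V →ₗ[ℝ] ℝ) (halt : ∀ x : V, ω x x = 0)
    (hnd : ∀ x ∈ LinearMap.ker η, (∀ y ∈ LinearMap.ker η, ω x y = 0) → x = 0)
    (R : V) (hRω : ∀ w : V, ω R w = 0) (hRη : η R = 1)
    (α : V →ₗ[ℝ] ℝ) (h : ℝ) :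
    ∃! X : V, (∀ w : V, ω X w = α w - α R * η w) ∧ η X = -h := by
  have hanti : ∀ x y : V, ω x y = - ω y x := by
    intro x y
    have := halt (x + y)
    simp only [map_add, LinearMap.add_apply, halt x, halt y] at this
    linarith
  set K := LinearMap.ker η
  set β : V →ₗ[ℝ] ℝ := α - α R • η with hβ
  have hβ_apply : ∀ w : V, β w = α w - α R * η w := by
    intro w; simp [hβ]
  -- the map from K to its dual given by ω
  let f : K →ₗ[ℝ] Module.Dual ℝ K :=
    { toFun := fun x => (ω x.1).comp K.subtype
      map_add' := by intro a b; ext y; simp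
      map_smul' := by intro c a; ext y; simp }
  have hfinj : Function.Injective f := by
    rw [injective_iff_map_eq_zero]
    intro a ha
    have key : ∀ y ∈ K, ω a.1 y = 0 := by
      intro y hy
      have := congrFun (congrArg DFunLike.coe ha) ⟨y, hy⟩
      simpa [f] using this
    exact Subtype.ext (hnd a.1 a.2 key)
  have hfsurj : Function.Surjective f := by
    have hd : Module.finrank ℝ K = Module.finrank ℝ (Module.Dual ℝ K) :=
      (Subspace.dual_finrank_eq).symm
    exact (LinearMap.injective_iff_surjective_of_finrank_eq_finrank hd).mp hfinj
  obtain ⟨X₀, hX₀⟩ := hfsurj (β.comp K.subtype)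
  have hX₀K : η X₀.1 = 0 := X₀.2
  have hX₀' : ∀ y ∈ K, ω X₀.1 y = β y := by
    intro y hy
    have := congrFun (congrArg DFunLike.coe hX₀) ⟨y, hy⟩
    simpa [f] using this
  have hβR : β R = 0 := by rw [hβ_apply, hRη]; ring
  have hXfull : ∀ w : V, ω X₀.1 w = β w := by
    intro w
    have hdec : w - η w • R ∈ K := by
      simp [K, hRη]
    have h1 := hX₀' _ hdec
    have h2 : ω X₀.1 R = 0 := by rw [hanti X₀.1 R, hRω X₀.1, neg_zero]
    simp only [map_sub, map_smul, smul_eq_mul, h2, hβR, mul_zero, sub_zero] at h1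
    exact h1
  have hXβ : ∀ w : V, ω (X₀.1 - h • R) w = β w := by
    intro w
    rw [map_sub, map_smul, LinearMap.sub_apply, LinearMap.smul_apply, hRω w, smul_zero,
      sub_zero, hXfull w]
  refine ⟨X₀.1 - h • R, ⟨fun w => by rw [hXβ w, hβ_apply], ?_⟩, ?_⟩
  · rw [map_sub, map_smul, hX₀K, hRη, smul_eq_mul, mul_one, zero_sub]
  · rintro Y ⟨hY1, hY2⟩
    have hD : ∀ w : V, ω (Y - (X₀.1 - h • R)) w = 0 := by
      intro w
      rw [map_sub, LinearMap.sub_apply, hY1 w, hXβ w, hβ_apply, sub_self]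
    have hDK : Y - (X₀.1 - h • R) ∈ K := by
      have : η (Y - (X₀.1 - h • R)) = 0 := by
        rw [map_sub, map_sub, map_smul, hY2, hX₀K, hRη, smul_eq_mul, mul_one]; ring
      exact this
    have := hnd _ hDK (fun y _ => hD y)
    exact sub_eq_zero.mp this
end

section
/- Let L : ℝⁿ × ℝⁿ × ℝ → ℝ be C², let σ_L(x)(a, c, e) = e − (∂L/∂v)(x)·a be the contact Lagrangian form, and let dσ_L be its exterior derivative dσ_L(x)(u, u') = (Dσ_L(x)u)(u') − (Dσ_L(x)u')(u). Suppose the Hessian W(x) = (∂²L/∂vⁱ∂vʲ)(x) is invertible at a point x, and set b(x) = (∂²L/∂z∂vⁱ)(x) ∈ ℝⁿ. Then the vector R_L(x) = (0, −W(x)⁻¹ b(x), 1) ∈ ℝⁿ × ℝⁿ × ℝ is the unique tangent vector satisfying dσ_L(x)(R_L(x), u) = 0 for all tangent vectors u and σ_L(x)(R_L(x)) = 1. (Coordinate formula for the Reeb vector field R_L = ∂/∂z − W^{ji}(∂²L/∂z∂vʲ) ∂/∂vⁱ of a regular contact Lagrangian system.) -/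
/-!
Write `H = D²L(x)`, `V c = (0, c, 0)`, `W` for the velocity Hessian and `b` for the mixed
derivatives. Differentiating `σ_L(y)(u) = u_z − DL(y)(V u_q)` gives
`dσ_L(x)(u, u') = H(u', V u_q) − H(u, V u'_q)`. Testing `dσ_L(x)(Y, ·)` on velocity vectors
yields `W Y_q = 0`, so `Y_q = 0`. For `Y = (0, c, z)` one has `σ_L(x)(Y) = z` and
`dσ_L(x)(Y, u) = −(cᵀW + z bᵀ)·u_q`, so the Reeb conditions say exactly `z = 1` and
`cᵀW = −bᵀ`, i.e. `c = −W⁻ᵀb`.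
-/

open scoped BigOperators

noncomputable section

/-- Points of `TQ × ℝ = ℝⁿ × ℝⁿ × ℝ`, coordinates `(q, v, z)`. -/
abbrev LPt (n : ℕ) := (Fin n → ℝ) × (Fin n → ℝ) × ℝ

/-- The fibre derivative `∂L/∂vⁱ` at `x`. -/
def pderivV {n : ℕ} (L : LPt n → ℝ) (x : LPt n) (i : Fin n) : ℝ :=
  fderiv ℝ L x ((0 : Fin n → ℝ), Pi.single i (1 : ℝ), (0 : ℝ))

/-- The Hessian matrix `W_{ij} = ∂²L/∂vⁱ∂vʲ` at `x`. -/
def hessianV {n : ℕ} (L : LPt n → ℝ) (x : LPt n) : Matrix (Fin n) (Fin n) ℝ :=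
  Matrix.of fun i j =>
    fderiv ℝ (fun y => pderivV L y j) x ((0 : Fin n → ℝ), Pi.single i (1 : ℝ), (0 : ℝ))

/-- The mixed second partial derivatives `b(x)ᵢ = ∂²L/∂z∂vⁱ` at `x`. -/
def mixedZV {n : ℕ} (L : LPt n → ℝ) (x : LPt n) (i : Fin n) : ℝ :=
  fderiv ℝ (fun y => pderivV L y i) x ((0 : Fin n → ℝ), (0 : Fin n → ℝ), (1 : ℝ))

/-- The contact Lagrangian form `σ_L(x)(a, c, e) = e − (∂L/∂v)(x)·a`. -/
def sigmaL {n : ℕ} (L : LPt n → ℝ) (x u : LPt n) : ℝ :=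
  u.2.2 - ∑ i, pderivV L x i * u.1 i

/-- The exterior derivative `dσ_L(x)(u, u') = (Dσ_L(x)u)(u') − (Dσ_L(x)u')(u)`. -/
def dsigmaL {n : ℕ} (L : LPt n → ℝ) (x u u' : LPt n) : ℝ :=
  fderiv ℝ (fun y => sigmaL L y u') x u - fderiv ℝ (fun y => sigmaL L y u) x u'

/-- The coordinate Reeb vector `R_L(x) = (0, −W(x)⁻¹ b(x), 1)`, with components
`R_Lⁱ = −W^{ji}(∂²L/∂z∂vʲ)` in the velocity slot. -/
def reebL {n : ℕ} (L : LPt n → ℝ) (x : LPt n) : LPt n :=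
  ((0 : Fin n → ℝ), fun i => -∑ j, (hessianV L x)⁻¹ j i * mixedZV L x j, (1 : ℝ))

open Matrix

lemma Matrix.vecMul_add_eq_zero_iff {m K : Type*} [Fintype m] [DecidableEq m] [CommRing K]
    {A : Matrix m m K} (hA : IsUnit A) (c b : m → K) :
    c ᵥ* A + b = 0 ↔ c = -(b ᵥ* A⁻¹) := by
  have hdet : IsUnit A.det := (isUnit_iff_isUnit_det A).mp hA
  rw [add_eq_zero_iff_eq_neg, ← neg_vecMul]
  constructor
  · intro h
    rw [← h, vecMul_vecMul, mul_nonsing_inv A hdet, vecMul_one]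
  · rintro rfl
    rw [vecMul_vecMul, nonsing_inv_mul A hdet, vecMul_one]

lemma ContinuousLinearMap.apply_eq_sum_single {ι R M : Type*} [Fintype ι] [DecidableEq ι]
    [Semiring R] [TopologicalSpace R] [AddCommMonoid M] [Module R M] [TopologicalSpace M]
    (f : (ι → R) →L[R] M) (w : ι → R) :
    f w = ∑ j, w j • f (Pi.single j 1) := by
  conv_lhs => rw [← Finset.univ_sum_single w]
  rw [map_sum]
  refine Finset.sum_congr rfl fun j _ => ?_
  rw [← map_smul, ← Pi.single_smul, smul_eq_mul, mul_one]

section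

variable {n : ℕ}

def velocityCLM : (Fin n → ℝ) →L[ℝ] LPt n :=
  (ContinuousLinearMap.inr ℝ _ _).comp (ContinuousLinearMap.inl ℝ _ _)

@[simp]
lemma velocityCLM_apply (c : Fin n → ℝ) : velocityCLM c = ((0 : Fin n → ℝ), c, (0 : ℝ)) := rfl

lemma sum_pderivV_mul (L : LPt n → ℝ) (y : LPt n) (c : Fin n → ℝ) :
    ∑ i, pderivV L y i * c i = fderiv ℝ L y (velocityCLM c) := by
  rw [← ContinuousLinearMap.comp_apply, ContinuousLinearMap.apply_eq_sum_single]
  simp [pderivV, mul_comm]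

lemma sigmaL_eq (L : LPt n → ℝ) (y u : LPt n) :
    sigmaL L y u = u.2.2 - fderiv ℝ L y (velocityCLM u.1) := by
  rw [sigmaL, sum_pderivV_mul]

variable {L : LPt n → ℝ} {x : LPt n}

lemma fderiv_fderiv_apply_const (hL : DifferentiableAt ℝ (fderiv ℝ L) x) (c w : LPt n) :
    fderiv ℝ (fun y => fderiv ℝ L y c) x w = fderiv ℝ (fderiv ℝ L) x w c := by
  rw [fderiv_clm_apply hL (differentiableAt_const c)]
  simp

lemma fderiv_sigmaL_apply (hL : DifferentiableAt ℝ (fderiv ℝ L) x) (u w : LPt n) :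
    fderiv ℝ (fun y => sigmaL L y u) x w = -fderiv ℝ (fderiv ℝ L) x w (velocityCLM u.1) := by
  simp_rw [sigmaL_eq]
  rw [fderiv_const_sub, _root_.neg_apply, fderiv_fderiv_apply_const hL]

lemma dsigmaL_eq (hL : DifferentiableAt ℝ (fderiv ℝ L) x) (u u' : LPt n) :
    dsigmaL L x u u' = fderiv ℝ (fderiv ℝ L) x u' (velocityCLM u.1)
      - fderiv ℝ (fderiv ℝ L) x u (velocityCLM u'.1) := by
  rw [dsigmaL, fderiv_sigmaL_apply hL, fderiv_sigmaL_apply hL]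
  ring

lemma hessianV_apply (hL : DifferentiableAt ℝ (fderiv ℝ L) x) (i j : Fin n) :
    hessianV L x i j = fderiv ℝ (fderiv ℝ L) x (velocityCLM (Pi.single i 1))
      (velocityCLM (Pi.single j 1)) :=
  fderiv_fderiv_apply_const hL _ _

lemma mixedZV_apply (hL : DifferentiableAt ℝ (fderiv ℝ L) x) (i : Fin n) :
    mixedZV L x i = fderiv ℝ (fderiv ℝ L) x ((0 : Fin n → ℝ), (0 : Fin n → ℝ), (1 : ℝ))
      (velocityCLM (Pi.single i 1)) :=
  fderiv_fderiv_apply_const hL _ _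

lemma fderiv_fderiv_velocityCLM_velocityCLM (hL : DifferentiableAt ℝ (fderiv ℝ L) x)
    (c w : Fin n → ℝ) :
    fderiv ℝ (fderiv ℝ L) x (velocityCLM c) (velocityCLM w) = c ⬝ᵥ (hessianV L x *ᵥ w) := by
  rw [← ContinuousLinearMap.comp_apply _ velocityCLM c, ContinuousLinearMap.apply_eq_sum_single]
  simp only [_root_.sum_apply, _root_.smul_apply,
    ContinuousLinearMap.comp_apply, smul_eq_mul, dotProduct, mulVec, hessianV_apply hL]
  refine Finset.sum_congr rfl fun i _ => ?_
  rw [← ContinuousLinearMap.comp_apply _ velocityCLM w, ContinuousLinearMap.apply_eq_sum_single]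
  simp [Finset.mul_sum, mul_comm]

lemma fderiv_fderiv_dz_velocityCLM (hL : DifferentiableAt ℝ (fderiv ℝ L) x) (w : Fin n → ℝ) :
    fderiv ℝ (fderiv ℝ L) x ((0 : Fin n → ℝ), (0 : Fin n → ℝ), (1 : ℝ)) (velocityCLM w) =
      mixedZV L x ⬝ᵥ w := by
  rw [← ContinuousLinearMap.comp_apply _ velocityCLM w, ContinuousLinearMap.apply_eq_sum_single]
  simp [dotProduct, mixedZV_apply hL, mul_comm]

lemma fderiv_fderiv_vertical_velocityCLM (hL : DifferentiableAt ℝ (fderiv ℝ L) x)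
    (c w : Fin n → ℝ) (z : ℝ) :
    fderiv ℝ (fderiv ℝ L) x ((0 : Fin n → ℝ), c, z) (velocityCLM w) =
      (c ᵥ* hessianV L x + z • mixedZV L x) ⬝ᵥ w := by
  have hdecomp : (((0 : Fin n → ℝ), c, z) : LPt n) =
      velocityCLM c + z • ((0 : Fin n → ℝ), (0 : Fin n → ℝ), (1 : ℝ)) := by
    simp
  rw [hdecomp, map_add, map_smul, _root_.add_apply, _root_.smul_apply, smul_eq_mul,
    fderiv_fderiv_velocityCLM_velocityCLM hL, fderiv_fderiv_dz_velocityCLM hL,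
    add_dotProduct, smul_dotProduct, dotProduct_mulVec, smul_eq_mul]

lemma dsigmaL_vertical (hL : DifferentiableAt ℝ (fderiv ℝ L) x) (c : Fin n → ℝ) (z : ℝ)
    (u : LPt n) :
    dsigmaL L x ((0 : Fin n → ℝ), c, z) u = -((c ᵥ* hessianV L x + z • mixedZV L x) ⬝ᵥ u.1) := by
  rw [dsigmaL_eq hL, map_zero, map_zero, fderiv_fderiv_vertical_velocityCLM hL, zero_sub]

lemma dsigmaL_vertical_eq_zero_iff (hL : DifferentiableAt ℝ (fderiv ℝ L) x)
    (c : Fin n → ℝ) (z : ℝ) :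
    (∀ u, dsigmaL L x ((0 : Fin n → ℝ), c, z) u = 0) ↔
      c ᵥ* hessianV L x + z • mixedZV L x = 0 := by
  simp_rw [dsigmaL_vertical hL, neg_eq_zero, ← dotProduct_eq_zero_iff]
  exact ⟨fun h w => h (w, 0, 0), fun h u => h u.1⟩

lemma fst_eq_zero_of_dsigmaL_eq_zero (hL : DifferentiableAt ℝ (fderiv ℝ L) x)
    (hW : IsUnit (hessianV L x)) {Y : LPt n} (hY : ∀ u, dsigmaL L x Y u = 0) : Y.1 = 0 := by
  have hWY : hessianV L x *ᵥ Y.1 = 0 := by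
    refine dotProduct_eq_zero_iff.mp fun w => ?_
    have hw : (velocityCLM w).1 = 0 := rfl
    have h := hY (velocityCLM w)
    rw [dsigmaL_eq hL, hw, map_zero, map_zero, sub_zero,
      fderiv_fderiv_velocityCLM_velocityCLM hL] at h
    rwa [dotProduct_comm]
  exact mulVec_injective_iff_isUnit.mpr hW (hWY.trans (mulVec_zero _).symm)

lemma reebL_eq (L : LPt n → ℝ) (x : LPt n) :
    reebL L x = ((0 : Fin n → ℝ), -(mixedZV L x ᵥ* (hessianV L x)⁻¹), (1 : ℝ)) := by
  simp only [reebL, mul_comm]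
  rfl

end

/-- Coordinate formula for the Reeb vector field
`R_L = ∂/∂z − W^{ji}(∂²L/∂z∂vʲ) ∂/∂vⁱ` of a regular contact Lagrangian system:
if the Hessian is invertible at `x`, then `R_L(x)` is the unique tangent vector with
`dσ_L(x)(R_L(x), u) = 0` for all `u` and `σ_L(x)(R_L(x)) = 1`. -/
theorem reeb_vector_field_lagrangian (n : ℕ) (L : LPt n → ℝ)
    (hL : ContDiff ℝ 2 L) (x : LPt n) (hW : IsUnit (hessianV L x)) :
    ((∀ u : LPt n, dsigmaL L x (reebL L x) u = 0) ∧ sigmaL L x (reebL L x) = 1) ∧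
    (∀ Y : LPt n, ((∀ u : LPt n, dsigmaL L x Y u = 0) ∧ sigmaL L x Y = 1) →
      Y = reebL L x) := by
  have hL' : DifferentiableAt ℝ (fderiv ℝ L) x :=
    (hL.fderiv_right (m := 1) (by norm_num)).differentiable one_ne_zero x
  refine ⟨⟨?_, by simp [reebL_eq, sigmaL]⟩, ?_⟩
  · rw [reebL_eq, dsigmaL_vertical_eq_zero_iff hL', one_smul, vecMul_add_eq_zero_iff hW]
  · rintro ⟨q, c, z⟩ ⟨hd, hσ⟩
    obtain rfl : q = 0 := fst_eq_zero_of_dsigmaL_eq_zero hL' hW hd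
    obtain rfl : z = 1 := by simpa [sigmaL] using hσ
    rw [dsigmaL_vertical_eq_zero_iff hL', one_smul, vecMul_add_eq_zero_iff hW] at hd
    rw [hd, reebL_eq]

end
end

section
/- Let L : ℝⁿ × ℝⁿ × ℝ → ℝ be C¹ and define the Hamiltonian function H(q, v, p, z) = p·v − L(q, v, z) on the extended unified bundle W = ℝⁿ × ℝⁿ × ℝⁿ × ℝ. At a point w₀ = (q, v, p, z), a tangent vector X = (f, F, G, f₀) ∈ ℝⁿ × ℝⁿ × ℝⁿ × ℝ satisfies the contact equations dη(X, u) = dH_{w₀}(u) − (∂H/∂z)(w₀)·η(u) for all tangent vectors u, together with η(X) = −H(w₀), if and only if: f = v (the second-order condition), p = (∂L/∂v)(q, v, z) (the Legendre constraint defining W₁ = graph(FL)), G = (∂L/∂q)(q, v, z) + (∂L/∂z)(q, v, z)·p, and f₀ = L(q, v, z). (Coordinate derivation of the unified Lagrangian–Hamiltonian equations, showing the SODE condition and the Legendre map arise from the constraint algorithm.) -/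
/-
The contact equation is linear in the test vector `u = (a, b, c, d)`. Expanding `dH` through the
partial derivatives of `L`, its `d`-term cancels against `(∂H/∂z) η(u) = -(∂L/∂z) (d - p·a)`, so
`dη(X, u) - dH(u) + (∂H/∂z) η(u) = (f - v)·c + (∂L/∂v - p)·b + (∂L/∂q + (∂L/∂z) p - G)·a`,
and testing against the `p`-, `v`- and `q`-directions separately gives the three conditions.
Once `f = v`, the term `p·v` drops out of `η(X) = -H`, which then reads `f₀ = L`.
-/

open scoped BigOperators

noncomputable section

/-- Points/tangent vectors of the extended unified (Pontryagin) bundle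
`W = ℝⁿ × ℝⁿ × ℝⁿ × ℝ`, coordinates `(q, v, p, z)`. -/
abbrev WPt (n : ℕ) := (Fin n → ℝ) × (Fin n → ℝ) × (Fin n → ℝ) × ℝ

/-- `∂L/∂qⁱ` at `x`. -/
def pderivQ {n : ℕ} (L : LPt n → ℝ) (x : LPt n) (i : Fin n) : ℝ :=
  fderiv ℝ L x (Pi.single i (1 : ℝ), (0 : Fin n → ℝ), (0 : ℝ))

/-- `∂L/∂z` at `x`. -/
def pderivZ {n : ℕ} (L : LPt n → ℝ) (x : LPt n) : ℝ :=
  fderiv ℝ L x ((0 : Fin n → ℝ), (0 : Fin n → ℝ), (1 : ℝ))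

/-- The precontact form `η = dz − Σ pᵢ dqⁱ` on `W` at `x`, acting on `(a,b,c,d)`
by `d − p·a`. -/
def unifiedEta {n : ℕ} (x w : WPt n) : ℝ := w.2.2.2 - ∑ i, x.2.2.1 i * w.1 i

/-- `dη((a,b,c,d),(a',b',c',d')) = a·c' − a'·c` on `W`. -/
def unifiedDEta {n : ℕ} (w w' : WPt n) : ℝ :=
  (∑ i, w.1 i * w'.2.2.1 i) - ∑ i, w'.1 i * w.2.2.1 i

/-- The unified Hamiltonian function `H(q, v, p, z) = p·v − L(q, v, z)` on `W`. -/
def unifiedH {n : ℕ} (L : LPt n → ℝ) (w : WPt n) : ℝ :=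
  (∑ i, w.2.2.1 i * w.2.1 i) - L (w.1, w.2.1, w.2.2.2)

open Matrix

lemma LinearMap.apply_eq_dotProduct_single {R ι : Type*} [CommSemiring R] [Fintype ι]
    [DecidableEq ι] (φ : (ι → R) →ₗ[R] R) (a : ι → R) :
    φ a = (fun i => φ (Pi.single i 1)) ⬝ᵥ a := by
  calc φ a = (LinearEquiv.piRing R R ι R).symm (LinearEquiv.piRing R R ι R φ) a := by
        rw [LinearEquiv.symm_apply_apply]
    _ = _ := by
      simp only [LinearEquiv.piRing_symm_apply, LinearEquiv.piRing_apply, smul_eq_mul,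
        dotProduct, mul_comm]

lemma fderiv_apply_eq_dotProduct_pderiv {n : ℕ} (L : LPt n → ℝ) (x u : LPt n) :
    fderiv ℝ L x u = pderivQ L x ⬝ᵥ u.1 + pderivV L x ⬝ᵥ u.2.1 + pderivZ L x * u.2.2 := by
  have hu : u = (u.1, 0) + (0, u.2.1, 0) + (0, 0, u.2.2) := by simp
  have hq : fderiv ℝ L x (u.1, 0) = pderivQ L x ⬝ᵥ u.1 :=
    ((fderiv ℝ L x).toLinearMap.comp (LinearMap.inl ℝ _ _)).apply_eq_dotProduct_single u.1
  have hv : fderiv ℝ L x (0, u.2.1, 0) = pderivV L x ⬝ᵥ u.2.1 :=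
    ((fderiv ℝ L x).toLinearMap.comp ((LinearMap.inr ℝ _ _).comp
      (LinearMap.inl ℝ _ _))).apply_eq_dotProduct_single u.2.1
  have hz : fderiv ℝ L x (0, 0, u.2.2) = pderivZ L x * u.2.2 := by
    simpa [pderivZ, mul_comm] using (fderiv ℝ L x).map_smul u.2.2 (0, 0, 1)
  conv_lhs => rw [hu, map_add, map_add, hq, hv, hz]

section

variable {n : ℕ} {L : LPt n → ℝ} {w₀ : WPt n}

lemma fderiv_unifiedH_apply
    (hL : DifferentiableAt ℝ L (w₀.1, w₀.2.1, w₀.2.2.2)) (u : WPt n) :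
    fderiv ℝ (unifiedH L) w₀ u =
      w₀.2.2.1 ⬝ᵥ u.2.1 + w₀.2.1 ⬝ᵥ u.2.2.1 -
        fderiv ℝ L (w₀.1, w₀.2.1, w₀.2.2.2) (u.1, u.2.1, u.2.2.2) := by
  have hw := hasFDerivAt_id (𝕜 := ℝ) w₀
  have hp : ∀ i, HasFDerivAt (fun w : WPt n => w.2.2.1 i) _ w₀ := fun i =>
    hasFDerivAt_pi'.1 hw.snd.snd.fst i
  have hv : ∀ i, HasFDerivAt (fun w : WPt n => w.2.1 i) _ w₀ := fun i =>
    hasFDerivAt_pi'.1 hw.snd.fst i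
  have hL' := hL.hasFDerivAt.comp w₀ (hw.fst.prodMk (hw.snd.fst.prodMk hw.snd.snd.snd))
  have hH : HasFDerivAt (unifiedH L) _ w₀ :=
    (HasFDerivAt.fun_sum fun i _ => (hp i).mul (hv i)).sub hL'
  rw [hH.fderiv]
  simp [dotProduct, Finset.sum_add_distrib]

lemma fderiv_unifiedH_reeb
    (hL : DifferentiableAt ℝ L (w₀.1, w₀.2.1, w₀.2.2.2)) :
    fderiv ℝ (unifiedH L) w₀ (0, 0, 0, 1) = -pderivZ L (w₀.1, w₀.2.1, w₀.2.2.2) := by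
  simp [fderiv_unifiedH_apply hL, pderivZ]

lemma unifiedDEta_eq_dotProduct (w w' : WPt n) :
    unifiedDEta w w' = w.1 ⬝ᵥ w'.2.2.1 - w'.1 ⬝ᵥ w.2.2.1 := rfl

lemma unifiedEta_eq_dotProduct (x w : WPt n) :
    unifiedEta x w = w.2.2.2 - x.2.2.1 ⬝ᵥ w.1 := rfl

lemma unifiedDEta_sub_contact_rhs
    (hL : DifferentiableAt ℝ L (w₀.1, w₀.2.1, w₀.2.2.2)) (X u : WPt n) :
    unifiedDEta X u - (fderiv ℝ (unifiedH L) w₀ u -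
        fderiv ℝ (unifiedH L) w₀ (0, 0, 0, 1) * unifiedEta w₀ u) =
      (X.1 - w₀.2.1) ⬝ᵥ u.2.2.1 + (pderivV L (w₀.1, w₀.2.1, w₀.2.2.2) - w₀.2.2.1) ⬝ᵥ u.2.1 +
        (pderivQ L (w₀.1, w₀.2.1, w₀.2.2.2) + pderivZ L (w₀.1, w₀.2.1, w₀.2.2.2) • w₀.2.2.1 -
          X.2.2.1) ⬝ᵥ u.1 := by
  rw [fderiv_unifiedH_reeb hL, fderiv_unifiedH_apply hL, fderiv_apply_eq_dotProduct_pderiv,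
    unifiedDEta_eq_dotProduct, unifiedEta_eq_dotProduct]
  simp only [sub_dotProduct, add_dotProduct, smul_dotProduct, smul_eq_mul]
  rw [dotProduct_comm u.1]
  ring

lemma forall_unifiedDEta_eq_iff
    (hL : DifferentiableAt ℝ L (w₀.1, w₀.2.1, w₀.2.2.2)) (X : WPt n) :
    (∀ u : WPt n, unifiedDEta X u = fderiv ℝ (unifiedH L) w₀ u -
        fderiv ℝ (unifiedH L) w₀ (0, 0, 0, 1) * unifiedEta w₀ u) ↔
      X.1 = w₀.2.1 ∧ w₀.2.2.1 = pderivV L (w₀.1, w₀.2.1, w₀.2.2.2) ∧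
        X.2.2.1 = pderivQ L (w₀.1, w₀.2.1, w₀.2.2.2) +
          pderivZ L (w₀.1, w₀.2.1, w₀.2.2.2) • w₀.2.2.1 := by
  simp_rw [← sub_eq_zero (a := unifiedDEta X _), unifiedDEta_sub_contact_rhs hL]
  constructor
  · intro h
    have hf : X.1 - w₀.2.1 = 0 := dotProduct_eq_zero_iff.1 fun c => by
      simpa only [dotProduct_zero, add_zero] using h (0, 0, c, 0)
    have hp : pderivV L (w₀.1, w₀.2.1, w₀.2.2.2) - w₀.2.2.1 = 0 :=
      dotProduct_eq_zero_iff.1 fun b => by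
        simpa only [dotProduct_zero, add_zero, zero_add] using h (0, b, 0, 0)
    have hG : pderivQ L (w₀.1, w₀.2.1, w₀.2.2.2) +
        pderivZ L (w₀.1, w₀.2.1, w₀.2.2.2) • w₀.2.2.1 - X.2.2.1 = 0 :=
      dotProduct_eq_zero_iff.1 fun a => by
        simpa only [dotProduct_zero, zero_add] using h (a, 0, 0, 0)
    exact ⟨sub_eq_zero.1 hf, (sub_eq_zero.1 hp).symm, (sub_eq_zero.1 hG).symm⟩
  · rintro ⟨hf, hp, hG⟩ u
    simp [hf, ← hp, ← hG]

lemma unifiedEta_eq_neg_unifiedH_iff {X : WPt n} (hX : X.1 = w₀.2.1) :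
    unifiedEta w₀ X = -unifiedH L w₀ ↔ X.2.2.2 = L (w₀.1, w₀.2.1, w₀.2.2.2) := by
  rw [unifiedEta, unifiedH, hX]
  constructor <;> intro h <;> linarith

end

/-- Coordinate derivation of the unified Lagrangian–Hamiltonian equations: at a point
`w₀ = (q, v, p, z)`, a tangent vector `X = (f, F, G, f₀)` satisfies the contact
equations `dη(X, u) = dH(u) − (∂H/∂z)·η(u)` for all `u` and `η(X) = −H(w₀)` iff
`f = v` (SODE condition), `p = ∂L/∂v` (the Legendre constraint defining
`W₁ = graph FL`), `G = ∂L/∂q + (∂L/∂z)·p`, and `f₀ = L(q, v, z)`. -/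
theorem unified_contact_equations_coordinates (n : ℕ) (L : LPt n → ℝ)
    (hL : ContDiff ℝ 1 L) (w₀ X : WPt n) :
    ((∀ u : WPt n, unifiedDEta X u =
        fderiv ℝ (unifiedH L) w₀ u -
          fderiv ℝ (unifiedH L) w₀
              ((0 : Fin n → ℝ), (0 : Fin n → ℝ), (0 : Fin n → ℝ), (1 : ℝ)) *
            unifiedEta w₀ u) ∧
      unifiedEta w₀ X = -unifiedH L w₀) ↔
    (X.1 = w₀.2.1 ∧
      w₀.2.2.1 = (fun i => pderivV L (w₀.1, w₀.2.1, w₀.2.2.2) i) ∧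
      X.2.2.1 = (fun i => pderivQ L (w₀.1, w₀.2.1, w₀.2.2.2) i +
        pderivZ L (w₀.1, w₀.2.1, w₀.2.2.2) * w₀.2.2.1 i) ∧
      X.2.2.2 = L (w₀.1, w₀.2.1, w₀.2.2.2)) := by
  rw [forall_unifiedDEta_eq_iff (hL.differentiable one_ne_zero).differentiableAt]
  constructor
  · rintro ⟨⟨hf, hp, hG⟩, hη⟩
    exact ⟨hf, hp, hG, (unifiedEta_eq_neg_unifiedH_iff hf).1 hη⟩
  · rintro ⟨hf, hp, hG, hz⟩
    exact ⟨⟨hf, hp, hG⟩, (unifiedEta_eq_neg_unifiedH_iff hf).2 hz⟩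

end
end

section
/- Let L : ℝⁿ × ℝⁿ × ℝ → ℝ be C². A C¹ curve σ(t) = (q(t), v(t), p(t), z(t)) in the Pontryagin bundle ℝⁿ × ℝⁿ × ℝⁿ × ℝ (with q of class C² and t ↦ p(t) differentiable) satisfies the unified system q̇ = v, p(t) = (∂L/∂v)(q, v, z), ṗᵢ = (∂L/∂qⁱ)(q, v, z) + pᵢ·(∂L/∂z)(q, v, z), ż = L(q, v, z), if and only if: v(t) = q̇(t) for all t (so the projected curve (q, q̇, z) is holonomic), the curve (q(t), z(t)) satisfies the Herglotz equations, and p(t) = (∂L/∂v)(q(t), q̇(t), z(t)), i.e., (q(t), p(t), z(t)) is the image of the holonomic curve under the Legendre map FL. (Coordinate version of the main equivalence theorem between solutions of the unified formalism and Lagrangian solutions.) -/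
open scoped BigOperators

noncomputable section

/-- The Herglotz (generalized Euler–Lagrange) equations for a curve `t ↦ (q(t), z(t))`. -/
def Herglotz {n : ℕ} (L : LPt n → ℝ) (q : ℝ → Fin n → ℝ) (z : ℝ → ℝ) : Prop :=
  ∀ t : ℝ, deriv z t = L (q t, deriv q t, z t) ∧
    ∀ i, deriv (fun s => pderivV L (q s, deriv q s, z s) i) t -
        pderivQ L (q t, deriv q t, z t) i =
      pderivZ L (q t, deriv q t, z t) * pderivV L (q t, deriv q t, z t) i


lemma deriv_apply' {n : ℕ} {p : ℝ → Fin n → ℝ} {t : ℝ} (hp : DifferentiableAt ℝ p t)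
    (i : Fin n) : deriv (fun s => p s i) t = deriv p t i :=
  (hasDerivAt_pi.mp hp.hasDerivAt i).deriv

/-- Coordinate version of the main equivalence theorem between solutions of the
unified formalism and Lagrangian solutions: a curve `σ(t) = (q(t), v(t), p(t), z(t))`
in the Pontryagin bundle satisfies the unified system
`q̇ = v`, `p = ∂L/∂v`, `ṗᵢ = ∂L/∂qⁱ + pᵢ·∂L/∂z`, `ż = L` iff `v = q̇` (the projected
curve is holonomic), `(q, z)` satisfies the Herglotz equations, and
`p = ∂L/∂v ∘ (q, q̇, z)`, i.e. `(q, p, z)` is the image under the Legendre map of the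
holonomic curve. -/
theorem unified_solutions_iff_herglotz (n : ℕ) (L : LPt n → ℝ)
    (hL : ContDiff ℝ 2 L)
    (q v p : ℝ → Fin n → ℝ) (z : ℝ → ℝ)
    (hσ : ContDiff ℝ 1 (fun t => (q t, v t, p t, z t)))
    (hq : ContDiff ℝ 2 q) (hp : Differentiable ℝ p) :
    (∀ t : ℝ, deriv q t = v t ∧
        p t = (fun i => pderivV L (q t, v t, z t) i) ∧
        (∀ i, deriv p t i =
          pderivQ L (q t, v t, z t) i + p t i * pderivZ L (q t, v t, z t)) ∧
        deriv z t = L (q t, v t, z t)) ↔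
      ((∀ t : ℝ, v t = deriv q t) ∧ Herglotz L q z ∧
        (∀ t : ℝ, p t = fun i => pderivV L (q t, deriv q t, z t) i)) := by
  constructor
  · intro h
    refine ⟨fun t => (h t).1.symm, fun t => ?_, fun t => ?_⟩
    · obtain ⟨h1, h2, h3, h4⟩ := h t
      refine ⟨by rw [h1]; exact h4, fun i => ?_⟩
      have hfun : (fun s => pderivV L (q s, deriv q s, z s) i) = fun s => p s i := by
        funext s
        obtain ⟨g1, g2, _, _⟩ := h s
        rw [g1, g2]
      rw [hfun, deriv_apply' (hp t) i, h1] at *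
      rw [h3 i, h2]
      ring
    · obtain ⟨h1, h2, _, _⟩ := h t
      rw [h2, h1]
  · intro ⟨hv, hH, hFL⟩ t
    obtain ⟨hz, hEL⟩ := hH t
    refine ⟨(hv t).symm, by rw [hFL t, hv t], fun i => ?_, by rw [hv t]; exact hz⟩
    have hfun : (fun s => pderivV L (q s, deriv q s, z s) i) = fun s => p s i := by
      funext s; rw [hFL s]
    have := hEL i
    rw [hfun, deriv_apply' (hp t) i] at this
    have hpt : p t i = pderivV L (q t, deriv q t, z t) i := by rw [hFL t]
    rw [hv t, hpt]
    linarith [this]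

end
end

section
/- Let γ ∈ ℝ and consider the singular Cawley Lagrangian with dissipation L(q, v, z) = v¹v³ + (1/2)q²(q³)² − γz on ℝ³ × ℝ³ × ℝ, where q = (q¹, q², q³) and v = (v¹, v², v³). If a C² curve t ↦ (q(t), z(t)) satisfies the Herglotz equations, then q³(t) = 0 for all t and q̈¹(t) + γ·q̇¹(t) = 0 for all t (while q² remains undetermined). (The secondary constraint q³ = 0 produced by the constraint algorithm of the unified formalism holds along every solution, and the remaining dynamics is damped free motion in q¹.) -/
/-!
For the Cawley Lagrangian, `∂L/∂v = (v³, 0, v¹)`, `∂L/∂q = (0, ½(q³)², q²q³)` and `∂L/∂z = −γ`.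
Since `∂L/∂v²` vanishes identically, the Herglotz equation for `q²` is the algebraic constraint
`½(q³)² = 0`; substituting `q³ = 0` into the equation for `q¹` leaves `q̈¹ = −γq̇¹`.
Coordinates `q¹, q², q³` are indexed `0, 1, 2`.
-/

open scoped BigOperators

noncomputable section

def cawleyLagrangian (γ : ℝ) (x : LPt 3) : ℝ :=
  x.2.1 0 * x.2.1 2 + (1 / 2) * x.1 1 * (x.1 2) ^ 2 - γ * x.2.2

theorem fderiv_cawleyLagrangian_apply (γ : ℝ) (x w : LPt 3) :
    fderiv ℝ (cawleyLagrangian γ) x w =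
      w.2.1 0 * x.2.1 2 + x.2.1 0 * w.2.1 2 + (1 / 2) * w.1 1 * (x.1 2) ^ 2
        + x.1 1 * x.1 2 * w.1 2 - γ * w.2.2 := by
  have hq (i : Fin 3) := (hasFDerivAt_apply i x.1).comp x (hasFDerivAt_fst (𝕜 := ℝ) (p := x))
  have hv (i : Fin 3) := (hasFDerivAt_apply i x.2.1).comp x (hasFDerivAt_snd (𝕜 := ℝ) (p := x)).fst
  have hz := (hasFDerivAt_snd (𝕜 := ℝ) (p := x)).snd
  have hL : HasFDerivAt (cawleyLagrangian γ) _ x :=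
    ((hv 0).mul (hv 2)).add (((hq 1).const_mul (1 / 2 : ℝ)).mul ((hq 2).pow 2))
      |>.sub (hz.const_mul γ)
  rw [hL.fderiv]
  simp only [sub_apply, add_apply, smul_apply,
    ContinuousLinearMap.comp_apply, ContinuousLinearMap.coe_fst',
    ContinuousLinearMap.coe_snd', ContinuousLinearMap.proj_apply, Function.comp_apply, smul_eq_mul,
    nsmul_eq_mul]
  ring

theorem pderivQ_cawleyLagrangian (γ : ℝ) (x : LPt 3) :
    pderivQ (cawleyLagrangian γ) x = ![0, (1 / 2) * (x.1 2) ^ 2, x.1 1 * x.1 2] := by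
  funext i; fin_cases i <;> simp [pderivQ, fderiv_cawleyLagrangian_apply]

theorem pderivV_cawleyLagrangian (γ : ℝ) (x : LPt 3) :
    pderivV (cawleyLagrangian γ) x = ![x.2.1 2, 0, x.2.1 0] := by
  funext i; fin_cases i <;> simp [pderivV, fderiv_cawleyLagrangian_apply]

theorem pderivZ_cawleyLagrangian (γ : ℝ) (x : LPt 3) : pderivZ (cawleyLagrangian γ) x = -γ := by
  simp [pderivZ, fderiv_cawleyLagrangian_apply]

namespace Herglotz

variable {γ : ℝ} {q : ℝ → Fin 3 → ℝ} {z : ℝ → ℝ}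

theorem cawleyLagrangian_secondary_constraint (h : Herglotz (cawleyLagrangian γ) q z) (t : ℝ) :
    q t 2 = 0 := by
  simpa [pderivQ_cawleyLagrangian, pderivV_cawleyLagrangian, pderivZ_cawleyLagrangian]
    using (h t).2 1

theorem cawleyLagrangian_damped (h : Herglotz (cawleyLagrangian γ) q z) (t : ℝ) :
    deriv (fun s => deriv q s 0) t + γ * deriv q t 0 = 0 := by
  have h2 := (h t).2 2
  simp only [pderivQ_cawleyLagrangian, pderivV_cawleyLagrangian, pderivZ_cawleyLagrangian,
    Matrix.cons_val, h.cawleyLagrangian_secondary_constraint t] at h2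
  linarith

end Herglotz

/-- For the singular Cawley Lagrangian with dissipation
`L(q, v, z) = v¹v³ + ½q²(q³)² − γz`, every Herglotz solution satisfies the secondary
constraint `q³ = 0` produced by the constraint algorithm of the unified formalism, and
the remaining dynamics is damped free motion in `q¹`: `q̈¹ + γq̇¹ = 0`. -/
theorem cawley_with_dissipation (γ : ℝ)
    (L : LPt 3 → ℝ)
    (hLdef : ∀ x : LPt 3, L x =
      x.2.1 0 * x.2.1 2 + (1 / 2) * x.1 1 * (x.1 2) ^ 2 - γ * x.2.2)
    (q : ℝ → Fin 3 → ℝ) (z : ℝ → ℝ)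
    (hcurve : ContDiff ℝ 2 (fun t => (q t, z t)))
    (hherglotz : Herglotz L q z) :
    (∀ t : ℝ, q t 2 = 0) ∧
      (∀ t : ℝ, deriv (deriv q) t 0 + γ * deriv q t 0 = 0) := by
  obtain rfl : L = cawleyLagrangian γ := funext hLdef
  have hdq : Differentiable ℝ (deriv q) := hcurve.fst.differentiable_deriv_two
  refine ⟨hherglotz.cawleyLagrangian_secondary_constraint, fun t => ?_⟩
  rw [deriv_pi fun i => differentiableAt_pi.1 (hdq t) i]
  exact hherglotz.cawleyLagrangian_damped t

end
end
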